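/- Let A be a commutative ring, let p, ξ ∈ A, and let M be an A-module such that ξ acts injectively on M and such that the following gluing property holds: whenever x in the localization M[1/ξ] and y in the localization M[1/p] have the same image in M[1/(pξ)], there exists m ∈ M mapping to x in M[1/ξ] and to y in M[1/p]. Then M/ξM has no p-torsion; that is, for every m ∈ M with p·m ∈ ξM one has m ∈ ξM. -/
import Mathlib


/-- Let `A` be a commutative ring, `p ξ : A`, and `M` an `A`-module on which `ξ`
acts injectively and which satisfies the gluing property: whenever an element of
`M[1/ξ]` and an element of `M[1/p]` have the same image in `M[1/(pξ)]`, they come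
from a common element of `M`.  Then `M/ξM` has no `p`-torsion: if `p • m ∈ ξ • M`
then `m ∈ ξ • M`. -/
theorem no_p_torsion_of_glueing
    {A : Type*} [CommRing A] (p ξ : A)
    (M : Type*) [AddCommGroup M] [Module A M]
    (hinj : ∀ m : M, ξ • m = 0 → m = 0)
    (hglue : ∀ (m₁ m₂ : M) (a b : ℕ),
      (LocalizedModule.mk ((p ^ a) • m₁)
          ⟨(p * ξ) ^ a, pow_mem (Submonoid.mem_powers _) a⟩ :
        LocalizedModule (Submonoid.powers (p * ξ)) M) =
        LocalizedModule.mk ((ξ ^ b) • m₂)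
          ⟨(p * ξ) ^ b, pow_mem (Submonoid.mem_powers _) b⟩ →
      ∃ m : M,
        (LocalizedModule.mk m 1 : LocalizedModule (Submonoid.powers ξ) M) =
          LocalizedModule.mk m₁ ⟨ξ ^ a, pow_mem (Submonoid.mem_powers _) a⟩ ∧
        (LocalizedModule.mk m 1 : LocalizedModule (Submonoid.powers p) M) =
          LocalizedModule.mk m₂ ⟨p ^ b, pow_mem (Submonoid.mem_powers _) b⟩) :
    ∀ m : M, (∃ m' : M, p • m = ξ • m') → ∃ m'' : M, m = ξ • m'' := by
  intro m ⟨m', hm'⟩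
  obtain ⟨n, h1, -⟩ := hglue m m' 1 1 (by
    rw [show (p:A) ^ 1 • m = ξ ^ 1 • m' by rw [pow_one, pow_one, hm']])
  rw [LocalizedModule.mk_eq] at h1
  obtain ⟨u, hu⟩ := h1
  obtain ⟨k, hk⟩ := u.2
  refine ⟨n, ?_⟩
  have hu' : (ξ ^ k) • (ξ ^ 1 : A) • n = (ξ ^ k) • m := by
    simpa [Submonoid.smul_def, hk, one_smul] using hu
  have key : ∀ j : ℕ, ∀ x : M, (ξ ^ j) • x = 0 → x = 0 := by
    intro j
    induction j with
    | zero => intro x hx; simpa using hx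
    | succ j ih =>
      intro x hx
      refine ih x (hinj _ ?_)
      rw [smul_smul, mul_comm, ← pow_succ]
      exact hx
  have h0 : (ξ ^ k) • (ξ • n - m) = 0 := by
    rw [smul_sub, sub_eq_zero]
    simpa [pow_one] using hu'
  have := key k _ h0
  rw [sub_eq_zero] at this
  exact this.symm
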